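/- arXiv:2411.08084 — 2 statements merged into one kernel-verified Lean document; each statement's English description precedes it below -/
import Mathlib

section
/- Let f be the Collatz map, H a complex Hilbert space with orthonormal basis {e_n}_{n≥1}, and T the unique bounded operator on H with T e_n = e_{f(n)}. If C*(T) has no non-trivial reducing subspaces (i.e. every closed subspace M ⊆ H with AM ⊆ M and A*M ⊆ M for all A ∈ C*(T) is {0} or H), then the Collatz conjecture holds. -/
/-- The Collatz map on positive integers: `3n+1` for odd `n`, `n/2` for even `n`. -/
def collatz (n : ℕ+) : ℕ+ :=
  if h : (n : ℕ) % 2 = 1 then 3 * n + 1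
  else ⟨(n : ℕ) / 2, by
    have h2 : 0 < n.1 := n.2
    have h3 : ¬ n.1 % 2 = 1 := h
    show 0 < n.1 / 2
    omega⟩

/-- The forward orbit of `x` under `f`. -/
def orbit {X : Type*} (f : X → X) (x : X) : Set X := Set.range fun k => f^[k] x

/-- The orbit equivalence relation induced by `f`: `x ~ y` iff the orbits meet. -/
def orbEquiv {X : Type*} (f : X → X) (x y : X) : Prop :=
  (orbit f x ∩ orbit f y).Nonempty

/-- The C*-algebra of operators generated by a set `S` of bounded operators on a complex
Hilbert space: the closure of the (non-unital) star subalgebra generated by `S`. -/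
noncomputable def CstarGen {H : Type*} [NormedAddCommGroup H] [InnerProductSpace ℂ H]
    [CompleteSpace H] (S : Set (H →L[ℂ] H)) : Set (H →L[ℂ] H) :=
  closure (NonUnitalStarAlgebra.adjoin ℂ S : Set (H →L[ℂ] H))

/-!
Let `S` be the set of `n` whose orbit reaches `1`. Since `1` lies on the cycle `1 → 4 → 2 → 1`,
both `S` and its complement are mapped into themselves by `f`, so the closed span `M` of
`{e_n : n ∈ S}` and its orthogonal complement, the closed span of `{e_n : n ∉ S}`, are both
`T`-invariant. Hence the orthogonal projection onto `M` commutes with `T`, and therefore with all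
of `C*(T)`: `M` reduces `C*(T)`. As `e_1 ∈ M`, irreducibility forces `M = H`, i.e. `S` is
everything.
-/

open Module End Submodule
open scoped InnerProductSpace

section HilbertBasis

variable {ι 𝕜 E : Type*} [RCLike 𝕜] [NormedAddCommGroup E] [InnerProductSpace 𝕜 E]
  (b : HilbertBasis ι 𝕜 E)

theorem HilbertBasis.closure_span_image_eq_orthogonal (s : Set ι) :
    (span 𝕜 (b '' s)).topologicalClosure = (span 𝕜 (b '' sᶜ))ᗮ := by
  apply le_antisymm
  · refine topologicalClosure_minimal _ ?_ (isClosed_orthogonal _)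
    rw [← isOrtho_iff_le, isOrtho_span]
    rintro _ ⟨i, hi, rfl⟩ _ ⟨j, hj, rfl⟩
    exact b.orthonormal.inner_eq_zero (ne_of_mem_of_not_mem hi hj)
  · intro x hx
    rw [← SetLike.mem_coe, topologicalClosure_coe]
    refine mem_closure_of_tendsto (b.hasSum_repr x) (Filter.Eventually.of_forall fun F => ?_)
    refine sum_mem fun i _ => ?_
    by_cases hi : i ∈ s
    · exact smul_mem _ _ (subset_span (Set.mem_image_of_mem b hi))
    · have : ⟪b i, x⟫_𝕜 = 0 :=
        inner_right_of_mem_orthogonal (subset_span (Set.mem_image_of_mem b hi)) hx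
      simp [b.repr_apply_apply, this]

theorem HilbertBasis.orthogonal_closure_span_image [CompleteSpace E] (s : Set ι) :
    (span 𝕜 (b '' s)).topologicalClosureᗮ = (span 𝕜 (b '' sᶜ)).topologicalClosure := by
  rw [b.closure_span_image_eq_orthogonal, orthogonal_orthogonal_eq_closure]

theorem HilbertBasis.mem_closure_span_image_iff {s : Set ι} {i : ι} :
    b i ∈ (span 𝕜 (b '' s)).topologicalClosure ↔ i ∈ s := by
  refine ⟨fun h => by_contra fun hi => ?_,
    fun hi => le_topologicalClosure _ (subset_span (Set.mem_image_of_mem b hi))⟩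
  rw [b.closure_span_image_eq_orthogonal] at h
  exact b.orthonormal.ne_zero i <| inner_self_eq_zero.mp <|
    inner_left_of_mem_orthogonal (subset_span (Set.mem_image_of_mem b hi)) h

theorem HilbertBasis.closure_span_image_mem_invtSubmodule {T : E →L[𝕜] E} {f : ι → ι}
    (hT : ∀ i, T (b i) = b (f i)) {s : Set ι} (hs : Set.MapsTo f s s) :
    (span 𝕜 (b '' s)).topologicalClosure ∈ invtSubmodule (T : E →ₗ[𝕜] E) := by
  refine topologicalClosure_mem_invtSubmodule ?_
  rw [mem_invtSubmodule, span_le]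
  rintro _ ⟨i, hi, rfl⟩
  simpa [hT] using subset_span (Set.mem_image_of_mem b (hs hi))

end HilbertBasis

section Reducing

theorem Submodule.commute_starProjection_iff {𝕜 E : Type*} [RCLike 𝕜] [NormedAddCommGroup E]
    [InnerProductSpace 𝕜 E] {M : Submodule 𝕜 E} [M.HasOrthogonalProjection] {T : E →L[𝕜] E} :
    Commute M.starProjection T ↔
      M ∈ invtSubmodule (T : E →ₗ[𝕜] E) ∧ Mᗮ ∈ invtSubmodule (T : E →ₗ[𝕜] E) := by
  rw [ContinuousLinearMap.IsIdempotentElem.commute_iff M.isIdempotentElem_starProjection,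
    range_starProjection, ker_starProjection]

variable {H : Type*} [NormedAddCommGroup H] [InnerProductSpace ℂ H] [CompleteSpace H]

theorem cstarGen_subset_centralizer {S : Set (H →L[ℂ] H)} {p : H →L[ℂ] H}
    (hp : IsSelfAdjoint p) (hS : ∀ T ∈ S, Commute p T) : CstarGen S ⊆ Set.centralizer {p} := by
  have hC : (NonUnitalStarSubalgebra.centralizer ℂ {p} : Set (H →L[ℂ] H)) =
      Set.centralizer {p} := by
    rw [NonUnitalStarSubalgebra.coe_centralizer, Set.star_singleton, hp.star_eq, Set.union_self]
  rw [← hC]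
  refine closure_minimal (NonUnitalStarAlgebra.adjoin_le fun T hT => ?_)
    (hC ▸ Set.isClosed_centralizer _)
  rw [hC, Set.mem_centralizer_iff]
  simpa [eq_comm] using (hS T hT).eq

theorem Submodule.reduces_of_mem_cstarGen {S : Set (H →L[ℂ] H)} {M : Submodule ℂ H}
    [M.HasOrthogonalProjection]
    (hS : ∀ T ∈ S, M ∈ invtSubmodule (T : H →ₗ[ℂ] H) ∧ Mᗮ ∈ invtSubmodule (T : H →ₗ[ℂ] H))
    {A : H →L[ℂ] H} (hA : A ∈ CstarGen S) {x : H} (hx : x ∈ M) :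
    A x ∈ M ∧ ContinuousLinearMap.adjoint A x ∈ M := by
  have hA : Commute M.starProjection A := Set.mem_centralizer_iff.mp
    (cstarGen_subset_centralizer (isSelfAdjoint_starProjection M)
      (fun T hT => commute_starProjection_iff.mpr (hS T hT)) hA) _ rfl
  have hA' : Commute M.starProjection (ContinuousLinearMap.adjoint A) := by
    simpa [(isSelfAdjoint_starProjection M).star_eq, ContinuousLinearMap.star_eq_adjoint]
      using hA.star_star
  exact ⟨(commute_starProjection_iff.mp hA).1 hx, (commute_starProjection_iff.mp hA').1 hx⟩

end Reducing

section Orbit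

variable {X : Type*} {f : X → X} {x y : X}

theorem mem_orbit_of_mem_orbit_apply (h : y ∈ orbit f (f x)) : y ∈ orbit f x := by
  obtain ⟨k, rfl⟩ := h
  exact ⟨k + 1, Function.iterate_succ_apply f k x⟩

theorem mem_orbit_apply_of_mem_orbit (hy : y ∈ orbit f (f y)) (h : y ∈ orbit f x) :
    y ∈ orbit f (f x) := by
  obtain ⟨_ | k, rfl⟩ := h
  · exact hy
  · exact ⟨k, (Function.iterate_succ_apply f k x).symm⟩

end Orbit

/-- If `C*(T)` has no non-trivial reducing subspaces, the Collatz conjecture holds. -/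
theorem collatz_of_irreducible_single {H : Type*} [NormedAddCommGroup H]
    [InnerProductSpace ℂ H] [CompleteSpace H] (b : HilbertBasis ℕ+ ℂ H)
    (T : H →L[ℂ] H) (hT : ∀ n : ℕ+, T (b n) = b (collatz n))
    (hirr : ∀ M : Submodule ℂ H, IsClosed (M : Set H) →
      (∀ A ∈ CstarGen {T}, ∀ x ∈ M, A x ∈ M ∧ ContinuousLinearMap.adjoint A x ∈ M) →
      M = ⊥ ∨ M = ⊤) :
    ∀ m : ℕ+, (1 : ℕ+) ∈ orbit collatz m := by
  let S : Set ℕ+ := {n | 1 ∈ orbit collatz n}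
  have one_mem_orbit_collatz_one : (1 : ℕ+) ∈ orbit collatz (collatz 1) := ⟨2, by decide⟩
  have hS : Set.MapsTo collatz S S :=
    fun _ => mem_orbit_apply_of_mem_orbit one_mem_orbit_collatz_one
  have hSc : Set.MapsTo collatz Sᶜ Sᶜ := fun _ hn hfn => hn (mem_orbit_of_mem_orbit_apply hfn)
  let M := (span ℂ (b '' S)).topologicalClosure
  have hTM : M ∈ invtSubmodule (T : H →ₗ[ℂ] H) ∧ Mᗮ ∈ invtSubmodule (T : H →ₗ[ℂ] H) :=
    ⟨b.closure_span_image_mem_invtSubmodule hT hS,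
      b.orthogonal_closure_span_image S ▸ b.closure_span_image_mem_invtSubmodule hT hSc⟩
  rcases hirr M (isClosed_topologicalClosure _)
    (fun A hA _ => M.reduces_of_mem_cstarGen (by rintro _ rfl; exact hTM) hA) with hM | hM
  · have h1 : b 1 ∈ M := b.mem_closure_span_image_iff.mpr ⟨0, rfl⟩
    rw [hM, mem_bot] at h1
    exact (b.orthonormal.ne_zero 1 h1).elim
  · intro m
    have hm : b m ∈ M := hM ▸ mem_top
    show m ∈ S
    exact b.mem_closure_span_image_iff.mp hm
end

section
/- Let f be the Collatz map, H a complex Hilbert space with orthonormal basis {e_n}_{n≥1}, and T1, T2 the bounded operators with T1 e_n = e_{3n+1} for n odd, T1 e_n = 0 for n even, T2 e_n = e_{n/2} for n even, T2 e_n = 0 for n odd. Then the following are equivalent: (i) there exists n ≥ 1 such that e_n is a cyclic vector for C*(T1,T2); (ii) the Collatz conjecture holds, i.e. 1 ∈ orb(m;f) for every m ≥ 1. -/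
/-!
Every operator in `C*(T₁,T₂)` is block diagonal for the partition of the basis according to
whether `1` lies in the orbit of the index: the generators move `eₖ` to `e_{f(k)}`, and `1` is
periodic. So if `eₙ` is cyclic, every `eₘ` lies in the block of `eₙ`, and `m = 1` puts `1` in
every orbit. Conversely, if `f^[k] m = 1`, the adjoints of the generators walk `e₁` back along
the orbit to `eₘ`, so the vectors `A e₁` span a dense subspace.
-/

open scoped InnerProductSpace InnerProduct

lemma mem_orbit_apply_iff {X : Type*} {f : X → X} {x y : X} (hx : x ∈ orbit f (f x)) :
    x ∈ orbit f (f y) ↔ x ∈ orbit f y := by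
  constructor
  · rintro ⟨k, hk⟩
    exact ⟨k + 1, (Function.iterate_succ_apply f k y).trans hk⟩
  · rintro ⟨_ | k, hk⟩
    · subst hk
      exact hx
    · exact ⟨k, (Function.iterate_succ_apply f k y).symm.trans hk⟩

lemma collatz_of_odd {n : ℕ+} (h : (n : ℕ) % 2 = 1) : collatz n = 3 * n + 1 := by
  simp [collatz, h]

lemma coe_collatz_of_even {n : ℕ+} (h : (n : ℕ) % 2 = 0) : (collatz n : ℕ) = n / 2 := by
  simp [collatz, show ¬(n : ℕ) % 2 = 1 by omega]

lemma collatz_injOn_even : Set.InjOn collatz {n | (n : ℕ) % 2 = 0} :=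
  fun j (hj : (j : ℕ) % 2 = 0) k (hk : (k : ℕ) % 2 = 0) hjk => by
    have hjk' := congrArg PNat.val hjk
    rw [coe_collatz_of_even hj, coe_collatz_of_even hk] at hjk'
    exact PNat.coe_injective (by omega)

lemma one_mem_orbit_collatz_iff {m : ℕ+} :
    1 ∈ orbit collatz (collatz m) ↔ 1 ∈ orbit collatz m :=
  mem_orbit_apply_iff ⟨2, rfl⟩

def IsCyclicVector {𝕜 H : Type*} [RCLike 𝕜] [NormedAddCommGroup H] [InnerProductSpace 𝕜 H]
    (S : Set (H →L[𝕜] H)) (x : H) : Prop :=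
  closure ((fun A => A x) '' S) = Set.univ

lemma IsCyclicVector.mono {𝕜 H : Type*} [RCLike 𝕜] [NormedAddCommGroup H]
    [InnerProductSpace 𝕜 H] {S S' : Set (H →L[𝕜] H)} {x : H} (hx : IsCyclicVector S x)
    (hS : S ⊆ S') : IsCyclicVector S' x :=
  Set.eq_univ_of_univ_subset (hx ▸ closure_mono (Set.image_mono hS))

namespace HilbertBasis

variable {ι 𝕜 H : Type*} [RCLike 𝕜] [NormedAddCommGroup H] [InnerProductSpace 𝕜 H]
  (b : HilbertBasis ι 𝕜 H)

lemma ext_inner {x y : H} (h : ∀ i, ⟪b i, x⟫_𝕜 = ⟪b i, y⟫_𝕜) : x = y :=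
  b.repr.injective <| lp.ext <| funext fun i => by simp only [b.repr_apply_apply, h]

lemma isCyclicVector_of_forall_exists_apply_eq {x : H} (𝒜 : Submodule 𝕜 (H →L[𝕜] H))
    (h : ∀ i, ∃ A ∈ 𝒜, A x = b i) : IsCyclicVector (𝒜 : Set (H →L[𝕜] H)) x := by
  have hspan : Submodule.span 𝕜 (Set.range b) ≤
      𝒜.map (ContinuousLinearMap.apply 𝕜 H x).toLinearMap :=
    Submodule.span_le.mpr <| Set.range_subset_iff.mpr fun i => Submodule.mem_map.mpr (h i)
  have hdense := Submodule.topologicalClosure_mono hspan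
  rw [b.dense_span, top_le_iff] at hdense
  have hclosure := congrArg SetLike.coe hdense
  rwa [Submodule.topologicalClosure_coe, Submodule.map_coe] at hclosure

variable [CompleteSpace H]

def blockDiagonal {α : Type*} (c : ι → α) : NonUnitalStarSubalgebra 𝕜 (H →L[𝕜] H) where
  carrier := {A | ∀ j k, c j ≠ c k → ⟪b j, A (b k)⟫_𝕜 = 0}
  zero_mem' _ _ _ := inner_zero_right _
  add_mem' hA hB j k hjk := by
    rw [add_apply, inner_add_right, hA j k hjk, hB j k hjk, add_zero]
  smul_mem' r A hA j k hjk := by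
    rw [smul_apply, inner_smul_right, hA j k hjk, mul_zero]
  star_mem' {A} hA j k hjk := by
    rw [ContinuousLinearMap.star_eq_adjoint, ContinuousLinearMap.adjoint_inner_right,
      ← inner_conj_symm, hA k j hjk.symm, map_zero]
  mul_mem' {A B} hA hB j k hjk := by
    rw [mul_apply_eq_comp, ← ContinuousLinearMap.adjoint_inner_left, ← b.tsum_inner_mul_inner]
    refine (tsum_congr fun i => ?_).trans tsum_zero
    rw [ContinuousLinearMap.adjoint_inner_left]
    by_cases hji : c j = c i
    · rw [hB i k (hji ▸ hjk), mul_zero]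
    · rw [hA j i hji, zero_mul]

variable {b}

lemma isClosed_blockDiagonal {α : Type*} (c : ι → α) :
    IsClosed (b.blockDiagonal c : Set (H →L[𝕜] H)) := by
  change IsClosed {A : H →L[𝕜] H | ∀ j k, c j ≠ c k → ⟪b j, A (b k)⟫_𝕜 = 0}
  simp only [Set.ofPred_forall]
  exact isClosed_iInter fun j => isClosed_iInter fun k => isClosed_iInter fun _ =>
    isClosed_eq (continuous_const.inner (ContinuousLinearMap.apply 𝕜 H (b k)).continuous)
      continuous_const

variable {T : H →L[𝕜] H} {p : ι → Prop} [DecidablePred p] {g : ι → ι}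

lemma mem_blockDiagonal_of_apply_eq_ite {α : Type*} {c : ι → α}
    (hT : ∀ k, T (b k) = if p k then b (g k) else 0) (hc : ∀ k, p k → c (g k) = c k) :
    T ∈ b.blockDiagonal c := by
  intro j k hjk
  rw [hT k]
  split_ifs with hk
  · exact b.orthonormal.inner_eq_zero fun hjg => hjk (hjg ▸ hc k hk)
  · exact inner_zero_right _

lemma adjoint_apply_eq_of_apply_eq_ite (hT : ∀ k, T (b k) = if p k then b (g k) else 0)
    (hg : Set.InjOn g {k | p k}) {k : ι} (hk : p k) : (T†) (b (g k)) = b k := by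
  classical
  have hon := orthonormal_iff_ite.mp b.orthonormal
  refine b.ext_inner fun j => ?_
  rw [ContinuousLinearMap.adjoint_inner_right, hT j]
  by_cases hj : p j
  · rw [if_pos hj, hon, hon]
    exact if_congr ⟨fun h => hg hj hk h, congrArg g⟩ rfl rfl
  · rw [if_neg hj, inner_zero_left, hon, if_neg]
    rintro rfl
    exact hj hk

end HilbertBasis

lemma eq_of_isCyclicVector_cstarGen {ι α H : Type*} [NormedAddCommGroup H]
    [InnerProductSpace ℂ H] [CompleteSpace H] {b : HilbertBasis ι ℂ H} {c : ι → α}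
    {S : Set (H →L[ℂ] H)} (hS : S ⊆ b.blockDiagonal c) {n : ι}
    (hn : IsCyclicVector (CstarGen S) (b n)) (m : ι) : c m = c n := by
  by_contra hmn
  have hsub : CstarGen S ⊆ b.blockDiagonal c :=
    closure_minimal (NonUnitalStarAlgebra.adjoin_le hS) (HilbertBasis.isClosed_blockDiagonal c)
  have horth : closure ((fun A => A (b n)) '' CstarGen S) ⊆ {x | ⟪b m, x⟫_ℂ = 0} :=
    closure_minimal (Set.image_subset_iff.mpr fun A hA => hsub hA m n hmn)
      (isClosed_eq (continuous_const.inner continuous_id) continuous_const)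
  rw [hn] at horth
  exact inner_self_ne_zero.mpr (b.orthonormal.ne_zero m) (horth (Set.mem_univ (b m)))

section CollatzOperators

variable {H : Type*} [NormedAddCommGroup H] [InnerProductSpace ℂ H] [CompleteSpace H]
  {b : HilbertBasis ℕ+ ℂ H} {T1 T2 : H →L[ℂ] H}

lemma exists_generator_apply_collatz
    (hT1 : ∀ n : ℕ+, T1 (b n) = if (n : ℕ) % 2 = 1 then b (3 * n + 1) else 0)
    (hT2 : ∀ n : ℕ+, T2 (b n) = if (n : ℕ) % 2 = 0 then b (collatz n) else 0) (m : ℕ+) :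
    ∃ T ∈ ({T1, T2} : Set (H →L[ℂ] H)),
      T (b m) = b (collatz m) ∧ (T†) (b (collatz m)) = b m := by
  rcases Nat.mod_two_eq_zero_or_one m with hm | hm
  · exact ⟨T2, by simp, by rw [hT2, if_pos hm],
      b.adjoint_apply_eq_of_apply_eq_ite hT2 collatz_injOn_even hm⟩
  · have hinj : Set.InjOn (fun k : ℕ+ => 3 * k + 1) {k | (k : ℕ) % 2 = 1} :=
      fun j _ k _ hjk => by simpa using hjk
    rw [collatz_of_odd hm]
    exact ⟨T1, by simp, by rw [hT1, if_pos hm],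
      b.adjoint_apply_eq_of_apply_eq_ite hT1 hinj hm⟩

lemma exists_mem_adjoin_apply_one_eq
    (hT1 : ∀ n : ℕ+, T1 (b n) = if (n : ℕ) % 2 = 1 then b (3 * n + 1) else 0)
    (hT2 : ∀ n : ℕ+, T2 (b n) = if (n : ℕ) % 2 = 0 then b (collatz n) else 0) {m : ℕ+}
    (hm : 1 ∈ orbit collatz m) :
    ∃ A ∈ NonUnitalStarAlgebra.adjoin ℂ {T1, T2}, A (b 1) = b m := by
  obtain ⟨k, hk⟩ := hm
  induction k generalizing m with
  | zero =>
    -- the star algebra is non-unital, so `e₁` itself is reached as `T† T e₁`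
    obtain rfl : m = 1 := hk
    obtain ⟨T, hT, hTb, hTadj⟩ := exists_generator_apply_collatz hT1 hT2 1
    have hTmem := NonUnitalStarAlgebra.subset_adjoin ℂ _ hT
    refine ⟨star T * T, mul_mem (star_mem hTmem) hTmem, ?_⟩
    rw [mul_apply_eq_comp, hTb, ContinuousLinearMap.star_eq_adjoint, hTadj]
  | succ k ih =>
    obtain ⟨A, hA, hAb⟩ := ih ((Function.iterate_succ_apply collatz k m).symm.trans hk)
    obtain ⟨T, hT, -, hTadj⟩ := exists_generator_apply_collatz hT1 hT2 m
    refine ⟨star T * A, mul_mem (star_mem (NonUnitalStarAlgebra.subset_adjoin ℂ _ hT)) hA, ?_⟩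
    rw [mul_apply_eq_comp, hAb, ContinuousLinearMap.star_eq_adjoint, hTadj]

lemma collatz_generators_subset_blockDiagonal
    (hT1 : ∀ n : ℕ+, T1 (b n) = if (n : ℕ) % 2 = 1 then b (3 * n + 1) else 0)
    (hT2 : ∀ n : ℕ+, T2 (b n) = if (n : ℕ) % 2 = 0 then b (collatz n) else 0) :
    ({T1, T2} : Set (H →L[ℂ] H)) ⊆ b.blockDiagonal fun m => 1 ∈ orbit collatz m := by
  rintro T (rfl | rfl)
  · refine HilbertBasis.mem_blockDiagonal_of_apply_eq_ite hT1 fun k hk => ?_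
    rw [← collatz_of_odd hk]
    exact propext one_mem_orbit_collatz_iff
  · exact HilbertBasis.mem_blockDiagonal_of_apply_eq_ite hT2 fun _ _ =>
      propext one_mem_orbit_collatz_iff

end CollatzOperators

/-- Some basis vector `eₙ` is cyclic for `C*(T₁,T₂)` iff the Collatz conjecture holds. -/
theorem cyclic_pair_iff_collatz {H : Type*} [NormedAddCommGroup H] [InnerProductSpace ℂ H]
    [CompleteSpace H] (b : HilbertBasis ℕ+ ℂ H)
    (T1 T2 : H →L[ℂ] H)
    (hT1 : ∀ n : ℕ+, T1 (b n) = if (n : ℕ) % 2 = 1 then b (3 * n + 1) else 0)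
    (hT2 : ∀ n : ℕ+, T2 (b n) = if (n : ℕ) % 2 = 0 then b (collatz n) else 0) :
    (∃ n : ℕ+, closure ((fun A => A (b n)) '' CstarGen {T1, T2}) = Set.univ) ↔
      ∀ m : ℕ+, (1 : ℕ+) ∈ orbit collatz m := by
  constructor
  · rintro ⟨n, hn⟩ m
    have hfiber :=
      eq_of_isCyclicVector_cstarGen (collatz_generators_subset_blockDiagonal hT1 hT2) hn
    exact (hfiber m).mpr ((hfiber 1).mp ⟨0, rfl⟩)
  · intro hcollatz
    let 𝒜 := NonUnitalStarAlgebra.adjoin ℂ ({T1, T2} : Set (H →L[ℂ] H))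
    have hcyc := b.isCyclicVector_of_forall_exists_apply_eq 𝒜.toNonUnitalSubalgebra.toSubmodule
      fun m => exists_mem_adjoin_apply_one_eq hT1 hT2 (hcollatz m)
    exact ⟨1, hcyc.mono subset_closure⟩
end
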